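/- arXiv:0911.2151 — 4 statements merged into one kernel-verified Lean document; each statement's English description precedes it below -/
import Mathlib

section
/- Let λ be an uncountable cardinal with 2^λ = λ⁺, and let σ < λ be an infinite regular cardinal such that λ^σ = λ. Then ◊*_{E^{λ⁺}_σ} holds. -/
/-!
Since `2 ^ λ = λ⁺`, the bounded subsets of `λ⁺` can be enumerated as `⟨Y i : i < λ⁺⟩`. Let `𝒜_α`
consist of the unions of `σ`-many sets `Y i` with `i < α`; it has at most `|α| ^ σ ≤ λ ^ σ = λ`
members. Given `Z`, the ordinals `α` such that every `Z ∩ β` with `β < α` is enumerated before `α`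
form a club, and for such an `α` of cofinality `σ`, `Z ∩ α` is the union of the sets
`Z ∩ (f i + 1)` along a cofinal sequence `f : σ → α`, hence lies in `𝒜_α`.
-/

noncomputable section

namespace DiamondSurvey

open Cardinal

/-- `λ⁺`, the successor cardinal of `lam`, identified with its initial ordinal. -/
def succOrd (lam : Cardinal.{0}) : Ordinal.{0} :=
  (Order.succ lam).ord

/-- `λ⁺⁺`, identified with its initial ordinal. -/
def succ2Ord (lam : Cardinal.{0}) : Ordinal.{0} :=
  (Order.succ (Order.succ lam)).ord

/-- `C` is a club in `κ`: a subset of `κ` that is unbounded in `κ` and closed under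
suprema of its nonempty bounded subsets. -/
def IsClubIn (C : Set Ordinal.{0}) (κ : Ordinal.{0}) : Prop :=
  C ⊆ Set.Iio κ ∧ (∀ α < κ, ∃ β ∈ C, α ≤ β) ∧
    ∀ s ⊆ C, s.Nonempty → sSup s < κ → sSup s ∈ C

/-- `S` is stationary in `κ`: it meets every club in `κ`. -/
def IsStationaryIn (S : Set Ordinal.{0}) (κ : Ordinal.{0}) : Prop :=
  ∀ C, IsClubIn C κ → (S ∩ C).Nonempty

/-- the cofinality of a cardinal -/
def cofC (lam : Cardinal.{0}) : Cardinal.{0} := lam.ord.cof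

/-- `E^{λ⁺}_σ = {α < λ⁺ : cf(α) = σ}` -/
def Eeq (lam σ : Cardinal.{0}) : Set Ordinal.{0} :=
  {α | α < succOrd lam ∧ α.cof = σ}

/-- `E^{λ⁺}_{≠ cf(λ)} = {α < λ⁺ : α limit, cf(α) ≠ cf(λ)}` -/
def Ene (lam : Cardinal.{0}) : Set Ordinal.{0} :=
  {α | α < succOrd lam ∧ Order.IsSuccLimit α ∧ α.cof ≠ cofC lam}

/-- `E^{λ⁺}_{< λ} = {α < λ⁺ : α limit, cf(α) < λ}` -/
def Elt (lam : Cardinal.{0}) : Set Ordinal.{0} :=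
  {α | α < succOrd lam ∧ Order.IsSuccLimit α ∧ α.cof < lam}

/-- `tr(S) = {γ < κ : cf(γ) > ω and S ∩ γ is stationary in γ}` -/
def tr (κ : Ordinal.{0}) (S : Set Ordinal.{0}) : Set Ordinal.{0} :=
  {γ | γ < κ ∧ Cardinal.aleph0 < γ.cof ∧ IsStationaryIn (S ∩ Set.Iio γ) γ}

/-- Jensen's diamond principle `◊_S`. -/
def Diamond (lam : Cardinal.{0}) (S : Set Ordinal.{0}) : Prop :=
  ∃ A : Ordinal.{0} → Set Ordinal.{0},
    (∀ α ∈ S, A α ⊆ Set.Iio α) ∧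
    ∀ Z : Set Ordinal.{0}, Z ⊆ Set.Iio (succOrd lam) →
      IsStationaryIn {α | α ∈ S ∧ Z ∩ Set.Iio α = A α} (succOrd lam)

/-- `◊*_S` -/
def DiamondStar (lam : Cardinal.{0}) (S : Set Ordinal.{0}) : Prop :=
  ∃ A : Ordinal.{0} → Set (Set Ordinal.{0}),
    (∀ α ∈ S, (∀ X ∈ A α, X ⊆ Set.Iio α) ∧ #(A α) ≤ Cardinal.lift.{1} lam) ∧
    ∀ Z : Set Ordinal.{0}, Z ⊆ Set.Iio (succOrd lam) →
      ∃ C, IsClubIn C (succOrd lam) ∧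
        ∀ α ∈ C ∩ S, Z ∩ Set.Iio α ∈ A α

/-- `◊⁺_S` -/
def DiamondPlus (lam : Cardinal.{0}) (S : Set Ordinal.{0}) : Prop :=
  ∃ A : Ordinal.{0} → Set (Set Ordinal.{0}),
    (∀ α ∈ S, (∀ X ∈ A α, X ⊆ Set.Iio α) ∧ #(A α) ≤ Cardinal.lift.{1} lam) ∧
    ∀ Z : Set Ordinal.{0}, Z ⊆ Set.Iio (succOrd lam) →
      ∃ C, IsClubIn C (succOrd lam) ∧
        ∀ α ∈ C ∩ S, Z ∩ Set.Iio α ∈ A α ∧ C ∩ Set.Iio α ∈ A α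

/-- `◊^{λ⁺}_{λ⁺}` -/
def DiamondTr (lam : Cardinal.{0}) : Prop :=
  ∃ A : Ordinal.{0} → Set (Set Ordinal.{0}),
    (∀ α < succOrd lam, (∀ X ∈ A α, X ⊆ Set.Iio α) ∧ #(A α) ≤ Cardinal.lift.{1} lam) ∧
    ∀ Z : Set Ordinal.{0}, Z ⊆ Set.Iio (succOrd lam) →
      ¬ IsStationaryIn
        (tr (succOrd lam) {α | α < succOrd lam ∧ Z ∩ Set.Iio α ∉ A α}) (succOrd lam)

/-- `♣⁻_S` -/
def ClubMinus (lam : Cardinal.{0}) (S : Set Ordinal.{0}) : Prop :=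
  ∃ A : Ordinal.{0} → Set (Set Ordinal.{0}),
    (∀ α ∈ S, (∀ X ∈ A α, X ⊆ Set.Iio α ∧ #X < Cardinal.lift.{1} lam) ∧
      #(A α) ≤ Cardinal.lift.{1} lam) ∧
    ∀ Z : Set Ordinal.{0}, Z ⊆ Set.Iio (succOrd lam) →
      (∀ β < succOrd lam, ∃ γ ∈ Z, β ≤ γ) →
      IsStationaryIn {α | α ∈ S ∧ ∃ X ∈ A α, sSup (Z ∩ X) = α} (succOrd lam)

/-- the order type of a set of ordinals -/
def otp (s : Set Ordinal.{0}) : Ordinal.{1} :=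
  Ordinal.type (Subrel ((· < ·) : Ordinal.{0} → Ordinal.{0} → Prop) (· ∈ s))

/-- the weak square principle `□*_λ` -/
def SquareStar (lam : Cardinal.{0}) : Prop :=
  ∃ 𝒞 : Ordinal.{0} → Set (Set Ordinal.{0}),
    ∀ α, α < succOrd lam → Order.IsSuccLimit α →
      (𝒞 α).Nonempty ∧ #(𝒞 α) ≤ Cardinal.lift.{1} lam ∧
      (∀ C ∈ 𝒞 α, IsClubIn C α) ∧
      (α.cof < lam → ∀ C ∈ 𝒞 α, otp C < Ordinal.lift.{1} lam.ord) ∧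
      (∀ C ∈ 𝒞 α, ∀ β < α, sSup (C ∩ Set.Iio β) = β → C ∩ Set.Iio β ∈ 𝒞 β)

/-- `T ∈ I[S;λ]` -/
def InIdealISL (lam : Cardinal.{0}) (S T : Set Ordinal.{0}) : Prop :=
  T ⊆ tr (succOrd lam) S ∧
  ∃ d : Ordinal.{0} → Ordinal.{0} → Ordinal.{0},
    (∀ α β, α < β → β < succOrd lam → d α β < (cofC lam).ord) ∧
    (∀ α β γ, α < β → β < γ → γ < succOrd lam → d α γ ≤ max (d α β) (d β γ)) ∧
    (∀ i < (cofC lam).ord, ∀ β < succOrd lam,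
      #{α : Ordinal.{0} | α < β ∧ d α β ≤ i} < Cardinal.lift.{1} lam) ∧
    ∃ C, IsClubIn C (succOrd lam) ∧
      ∀ γ ∈ T ∩ C, cofC lam < γ.cof →
        ∃ Sg ⊆ S ∩ Set.Iio γ, IsStationaryIn Sg γ ∧
          sSup {x : Ordinal.{0} | ∃ α ∈ Sg, ∃ β ∈ Sg, α < β ∧ x = d α β} < (cofC lam).ord

/-- the stationary approachability property `SAP_λ` -/
def SAP (lam : Cardinal.{0}) : Prop :=
  ∀ S ⊆ Eeq lam (cofC lam), IsStationaryIn S (succOrd lam) →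
    IsStationaryIn (tr (succOrd lam) S) (succOrd lam) →
    ∃ T, InIdealISL lam S T ∧ IsStationaryIn T (succOrd lam)

/-- the reflection principle `R₁(θ,κ)` -/
def R1 (θ κ : Cardinal.{0}) : Prop :=
  ∀ f : Ordinal.{0} → Ordinal.{0},
    (∀ α, α < θ.ord → Order.IsSuccLimit α → α.cof < κ → f α < κ.ord) →
    ∃ j < κ.ord,
      IsStationaryIn
        {δ | δ < θ.ord ∧ δ.cof = κ ∧
          IsStationaryIn
            ({α | α < θ.ord ∧ Order.IsSuccLimit α ∧ α.cof < κ ∧ f α < j} ∩ Set.Iio δ) δ}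
        θ.ord

/-- the weak diamond principle `Φ_S` -/
def WeakDiamond (lam : Cardinal.{0}) (S : Set Ordinal.{0}) : Prop :=
  ∀ F : (α : Ordinal.{0}) → (Set.Iio α → Bool) → Bool,
    ∃ g : Ordinal.{0} → Bool,
      ∀ f : Ordinal.{0} → Bool,
        IsStationaryIn {α | α ∈ S ∧ F α (fun β => f β.1) = g α} (succOrd lam)

/-- `L` is a ladder system on `S` -/
def IsLadderSystem (S : Set Ordinal.{0}) (L : Ordinal.{0} → Set Ordinal.{0}) : Prop :=
  ∀ α ∈ S, L α ⊆ Set.Iio α ∧ sSup (L α) = α ∧ otp (L α) = Ordinal.lift.{1} α.cof.ord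

/-- the ladder system `L` on `S` has the uniformization property -/
def HasUniformization (S : Set Ordinal.{0}) (L : Ordinal.{0} → Set Ordinal.{0}) : Prop :=
  ∀ c : Ordinal.{0} → Ordinal.{0} → Bool,
    ∃ f : Ordinal.{0} → Bool,
      ∀ α ∈ S, Order.IsSuccLimit α → sSup {β | β ∈ L α ∧ c α β ≠ f β} < α

/-- `𝒳` is a stationary family of sets in `[λ⁺]^{<λ}` -/
def IsStationaryFamily (lam : Cardinal.{0}) (𝒳 : Set (Set Ordinal.{0})) : Prop :=
  (∀ X ∈ 𝒳, X ⊆ Set.Iio (succOrd lam) ∧ #X < Cardinal.lift.{1} lam) ∧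
  ∀ f : Finset Ordinal.{0} → Ordinal.{0},
    (∀ s : Finset Ordinal.{0}, ↑s ⊆ Set.Iio (succOrd lam) → f s < succOrd lam) →
    ∃ X ∈ 𝒳, ∀ s : Finset Ordinal.{0}, ↑s ⊆ X → f s ∈ X

/-- the principle `(1)_S` -/
def Princ1 (lam : Cardinal.{0}) (S : Set Ordinal.{0}) : Prop :=
  ∃ 𝒳 : Set (Set Ordinal.{0}), IsStationaryFamily lam 𝒳 ∧
    (∀ X ∈ 𝒳, ∀ Y ∈ 𝒳, sSup X = sSup Y → X = Y) ∧
    ∀ X ∈ 𝒳, sSup X ∈ S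

/-- the principle `(λ)_S` -/
def PrincLam (lam : Cardinal.{0}) (S : Set Ordinal.{0}) : Prop :=
  ∃ 𝒳 : Set (Set Ordinal.{0}), IsStationaryFamily lam 𝒳 ∧
    (∀ β : Ordinal.{0}, #{X | X ∈ 𝒳 ∧ sSup X = β} ≤ Cardinal.lift.{1} lam) ∧
    ∀ X ∈ 𝒳, sSup X ∈ S

/-- `NS_{λ⁺} ↾ S` is saturated -/
def Saturated (lam : Cardinal.{0}) (S : Set Ordinal.{0}) : Prop :=
  ∀ F : Ordinal.{0} → Set Ordinal.{0},
    (∀ i < succ2Ord lam, F i ⊆ S ∧ IsStationaryIn (F i) (succOrd lam)) →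
    (∀ i j, i < j → j < succ2Ord lam → F i ≠ F j) →
    ∃ i j, i < j ∧ j < succ2Ord lam ∧ IsStationaryIn (F i ∩ F j) (succOrd lam)

/-- `(T, lt)` is a `λ⁺`-Souslin tree, with height function `ht`. -/
def IsSouslinTree (lam : Cardinal.{0}) (T : Type) (lt : T → T → Prop)
    (ht : T → Ordinal.{0}) : Prop :=
  (∀ x, ¬ lt x x) ∧
  (∀ x y z, lt x y → lt y z → lt x z) ∧
  (∀ x y z, lt x z → lt y z → lt x y ∨ x = y ∨ lt y x) ∧
  (∀ x y, lt x y → ht x < ht y) ∧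
  (∀ x, ∀ β < ht x, ∃! y, lt y x ∧ ht y = β) ∧
  (∀ x, ht x < succOrd lam) ∧
  (∀ α < succOrd lam, ∃ x, ht x = α) ∧
  (∀ α : Ordinal.{0}, #{x : T | ht x = α} ≤ lam) ∧
  (∀ A : Set T, (∀ x ∈ A, ∀ y ∈ A, x = y ∨ lt x y ∨ lt y x) → #A < Order.succ lam) ∧
  (∀ A : Set T, (∀ x ∈ A, ∀ y ∈ A, x ≠ y → ¬ lt x y ∧ ¬ lt y x) → #A < Order.succ lam)

/-- the set of cardinalities of `⊇`-cofinal subfamilies of `[λ]^σ` -/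
def covFamilies (lam σ : Cardinal.{0}) : Set Cardinal.{1} :=
  {c | ∃ D : Set (Set Ordinal.{0}),
    (∀ X ∈ D, X ⊆ Set.Iio lam.ord ∧ #X = Cardinal.lift.{1} σ) ∧
    (∀ Y : Set Ordinal.{0}, Y ⊆ Set.Iio lam.ord → #Y = Cardinal.lift.{1} σ →
      ∃ X ∈ D, Y ⊆ X) ∧
    #D = c}

/-- `cf([λ]^σ, ⊇)`, the least cardinality of a `⊇`-cofinal subfamily of `[λ]^σ` -/
def covNum (lam σ : Cardinal.{0}) : Cardinal.{1} := sInf (covFamilies lam σ)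

section Guessing

open Ordinal Set

theorem mk_boundedSubsets_le {lam : Cardinal.{0}} (hlam : Cardinal.aleph0 ≤ lam)
    (h2 : 2 ^ lam = Order.succ lam) :
    #{X : Set Ordinal.{0} | ∃ β < succOrd lam, X ⊆ Iio β} ≤
      Cardinal.lift.{1} (succOrd lam).card := by
  have hunion : {X : Set Ordinal.{0} | ∃ β < succOrd lam, X ⊆ Iio β} =
      ⋃ β : Iio (succOrd lam), 𝒫 Iio β.1 := by
    ext X
    simp
  have hpow : ∀ β : Iio (succOrd lam),
      #(𝒫 Iio β.1) ≤ Cardinal.lift.{1} (Order.succ lam) := fun β => by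
    rw [Cardinal.mk_powerset, Cardinal.mk_Iio_ordinal, ← h2, Cardinal.lift_power,
      Cardinal.lift_two]
    exact Cardinal.power_le_power_left two_ne_zero <| Cardinal.lift_le.mpr <|
      Order.lt_succ_iff.mp (Cardinal.lt_ord.mp β.2)
  rw [hunion, succOrd, Cardinal.card_ord]
  calc #(⋃ β : Iio (succOrd lam), 𝒫 Iio β.1)
      ≤ #(Iio (succOrd lam)) * ⨆ β : Iio (succOrd lam), #(𝒫 Iio β.1) :=
        Cardinal.mk_iUnion_le _
    _ ≤ Cardinal.lift.{1} (Order.succ lam) * Cardinal.lift.{1} (Order.succ lam) := by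
        rw [Cardinal.mk_Iio_ordinal, succOrd, Cardinal.card_ord]
        gcongr
        exact ciSup_le' hpow
    _ = Cardinal.lift.{1} (Order.succ lam) :=
        Cardinal.mul_eq_self <| Cardinal.aleph0_le_lift.mpr <| hlam.trans (Order.le_succ lam)

theorem exists_enum_of_mk_le {κ : Ordinal.{0}} {B : Set (Set Ordinal.{0})}
    (hB : #B ≤ Cardinal.lift.{1} κ.card) :
    ∃ Y : Ordinal.{0} → Set Ordinal.{0}, ∀ X ∈ B, ∃ i < κ, Y i = X := by
  rcases isEmpty_or_nonempty B with hB₀ | hB₀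
  · exact ⟨fun _ => ∅, fun X hX => (IsEmpty.false (⟨X, hX⟩ : B)).elim⟩
  rw [← Cardinal.mk_Iio_ordinal] at hB
  obtain ⟨F⟩ := hB
  let code : B → Ordinal.{0} := fun X => F X
  have hcode : Function.Injective code := Subtype.val_injective.comp F.injective
  refine ⟨fun i => (Function.invFun code i).1, fun X hX => ?_⟩
  exact ⟨code ⟨X, hX⟩, (F ⟨X, hX⟩).2,
    congrArg Subtype.val (Function.leftInverse_invFun hcode ⟨X, hX⟩)⟩

theorem exists_closurePoint_ge {κ : Cardinal.{0}} (hκ : κ.IsRegular) (hκω : Cardinal.aleph0 < κ)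
    {g : Ordinal.{0} → Ordinal.{0}} (hg : ∀ β < κ.ord, g β < κ.ord) {δ : Ordinal.{0}}
    (hδ : δ < κ.ord) : ∃ α, δ ≤ α ∧ α < κ.ord ∧ ∀ β < α, g β < α := by
  let F : Ordinal.{0} → Ordinal.{0} := fun γ => ⨆ β : Iio γ, g β + 1
  have hF : ∀ γ < κ.ord, F γ < κ.ord := fun γ hγ => by
    refine lift_iSup_add_one_lt_of_lt_cof ?_ fun β : Iio γ => hg β (β.2.trans hγ)
    rw [← lift_cof, hκ.cof_ord, Cardinal.mk_Iio_ordinal, Cardinal.lift_uzero, Cardinal.lift_lt]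
    exact Cardinal.lt_ord.mp hγ
  refine ⟨nfp F δ, le_nfp F δ, nfp_lt_ord (by rwa [hκ.cof_ord]) hF hδ, fun β hβ => ?_⟩
  obtain ⟨n, hn⟩ := lt_nfp_iff.mp hβ
  calc g β < g β + 1 := lt_add_one _
    _ ≤ F (F^[n] δ) := Ordinal.le_iSup (fun β : Iio (F^[n] δ) => g β + 1) ⟨β, hn⟩
    _ ≤ nfp F δ := by
      rw [← Function.iterate_succ_apply' F]
      exact iterate_le_nfp F δ (n + 1)

theorem isClubIn_setOf_forall_lt_exists_lt {κ : Cardinal.{0}} (hκ : κ.IsRegular)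
    (hκω : Cardinal.aleph0 < κ) {P : Ordinal.{0} → Ordinal.{0} → Prop}
    (hP : ∀ β < κ.ord, ∃ γ < κ.ord, P β γ) :
    IsClubIn {α | α < κ.ord ∧ ∀ β < α, ∃ γ < α, P β γ} κ.ord := by
  refine ⟨fun α hα => hα.1, fun δ hδ => ?_, fun s hs hne hsup => ⟨hsup, fun β hβ => ?_⟩⟩
  · choose! g hgκ hgP using hP
    obtain ⟨α, hδα, hακ, hgα⟩ := exists_closurePoint_ge hκ hκω hgκ hδ
    exact ⟨α, ⟨hακ, fun β hβ => ⟨g β, hgα β hβ, hgP β (hβ.trans hακ)⟩⟩, hδα⟩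
  · have hbdd : BddAbove s := ⟨κ.ord, fun x hx => (hs hx).1.le⟩
    obtain ⟨α, hα, hβα⟩ := (lt_csSup_iff hbdd hne).mp hβ
    obtain ⟨γ, hγ, hPγ⟩ := (hs hα).2 β hβα
    exact ⟨γ, hγ.trans_le (le_csSup hbdd hα), hPγ⟩

def sigmaUnions (Y : Ordinal.{0} → Set Ordinal.{0}) (σ : Cardinal.{0}) (α : Ordinal.{0}) :
    Set (Set Ordinal.{0}) :=
  {X | X ⊆ Iio α} ∩ range fun e : Iio σ.ord → Iio α => ⋃ i, Y (e i)

theorem mk_sigmaUnions_le (Y : Ordinal.{0} → Set Ordinal.{0}) (σ : Cardinal.{0})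
    (α : Ordinal.{0}) : #(sigmaUnions Y σ α) ≤ Cardinal.lift.{1} (α.card ^ σ) :=
  calc #(sigmaUnions Y σ α)
      ≤ #(range fun e : Iio σ.ord → Iio α => ⋃ i, Y (e i)) :=
        Cardinal.mk_le_mk_of_subset inter_subset_right
    _ ≤ #(Iio σ.ord → Iio α) := Cardinal.mk_range_le
    _ = Cardinal.lift.{1} (α.card ^ σ) := by
        rw [← Cardinal.power_def, Cardinal.mk_Iio_ordinal, Cardinal.mk_Iio_ordinal,
          Cardinal.card_ord, Cardinal.lift_power]

theorem inter_Iio_mem_sigmaUnions {Y : Ordinal.{0} → Set Ordinal.{0}} {Z : Set Ordinal.{0}}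
    {α : Ordinal.{0}} (hα : Order.IsSuccLimit α)
    (hY : ∀ β < α, ∃ γ < α, Y γ = Z ∩ Iio β) : Z ∩ Iio α ∈ sigmaUnions Y α.cof α := by
  obtain ⟨f, hf⟩ := exists_isFundamentalSeq (o := α) rfl
  choose! g hgα hgY using hY
  have hsucc : ∀ i, (f i).1 + 1 < α := fun i => hα.add_one_lt (f i).2
  refine ⟨inter_subset_right, fun i => ⟨g ((f i).1 + 1), hgα _ (hsucc i)⟩, ?_⟩
  ext x
  simp only [mem_iUnion, hgY _ (hsucc _), mem_inter_iff, mem_Iio]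
  constructor
  · rintro ⟨i, hxZ, hxi⟩
    exact ⟨hxZ, hxi.trans (hsucc i)⟩
  · rintro ⟨hxZ, hxα⟩
    obtain ⟨_, ⟨i, rfl⟩, hxi⟩ := hf.isCofinal_range ⟨x, hxα⟩
    exact ⟨i, hxZ, Order.lt_add_one_iff.mpr hxi⟩

end Guessing

theorem stmt1_general (lam σ : Cardinal.{0}) (hlam : Cardinal.aleph0 < lam)
    (h2 : 2 ^ lam = Order.succ lam)
    (hσ : σ.IsRegular) (hpow : lam ^ σ = lam) :
    DiamondStar lam (Eeq lam σ) := by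
  obtain ⟨Y, hY⟩ := exists_enum_of_mk_le (mk_boundedSubsets_le hlam.le h2)
  refine ⟨sigmaUnions Y σ, fun α hα => ⟨fun X hX => hX.1, ?_⟩, fun Z _ => ?_⟩
  · calc #(sigmaUnions Y σ α) ≤ Cardinal.lift.{1} (α.card ^ σ) := mk_sigmaUnions_le Y σ α
      _ ≤ Cardinal.lift.{1} (lam ^ σ) := Cardinal.lift_le.mpr <| Cardinal.power_le_power_right <|
          Order.lt_succ_iff.mp (Cardinal.lt_ord.mp hα.1)
      _ = Cardinal.lift.{1} lam := by rw [hpow]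
  · have hZ : ∀ β < succOrd lam, ∃ γ < succOrd lam, Y γ = Z ∩ Set.Iio β := fun β hβ =>
      hY _ ⟨β, hβ, Set.inter_subset_right⟩
    refine ⟨_, isClubIn_setOf_forall_lt_exists_lt (Cardinal.isRegular_succ hlam.le)
      (hlam.trans (Order.lt_succ lam)) hZ, ?_⟩
    rintro α ⟨⟨-, hαC⟩, -, hασ⟩
    subst hασ
    have hαlim := Ordinal.one_lt_cof_iff.mp (Cardinal.one_lt_aleph0.trans_le hσ.aleph0_le)
    exact inter_Iio_mem_sigmaUnions hαlim hαC

theorem stmt1 (lam σ : Cardinal.{0}) (hlam : Cardinal.aleph0 < lam)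
    (h2 : 2 ^ lam = Order.succ lam)
    (hσ : σ.IsRegular) (hsiglt : σ < lam) (hpow : lam ^ σ = lam) :
    DiamondStar lam (Eeq lam σ) :=
  stmt1_general lam σ hlam h2 hσ hpow

end DiamondSurvey
end
end

section
/- Let λ be a singular cardinal with 2^λ = λ⁺, and let σ < λ be an infinite regular cardinal with σ ≠ cf(λ) such that sup{μ^σ : μ a cardinal, μ < λ} = λ. Then ◊*_{E^{λ⁺}_σ} holds. -/
noncomputable section

namespace DiamondSurvey

open Cardinal

/-!
Since `2 ^ λ = λ⁺`, every subset of an ordinal `β < λ⁺` gets a code below `λ⁺`. Given `Z`, the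
ordinals closed under `ξ ↦ code (Z ∩ ξ)` form a club, and for such an `α` the set `Z ∩ α` is
recovered from the graph of this map on any unbounded subset of `α`. Write `α < λ⁺` as the union
of an enumeration of length `λ`. If `cf α = σ ≠ cf λ`, some unbounded subset of `α` of size `σ`
has its graph inside the first `w < λ` enumerated points, and there are only
`λ · sup_{μ < λ} μ ^ σ = λ` such small graphs: they are the guesses at `α`.
-/

open Set Order Ordinal

universe u

theorem exists_surjOn_of_mk_le {α β : Type u} {s : Set α} {t : Set β} (ht : t.Nonempty)
    (h : #t ≤ #s) : ∃ f : α → β, SurjOn f s t := by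
  obtain ⟨g⟩ := h
  have : Nonempty t := ht.to_subtype
  let g' : t → α := fun y => g y
  have hg' : Function.Injective g' := Subtype.val_injective.comp g.injective
  refine ⟨fun a => ((Function.invFun g' a : t) : β), fun y hy => ⟨g' ⟨y, hy⟩, (g _).2, ?_⟩⟩
  simp [Function.leftInverse_invFun hg' ⟨y, hy⟩]

theorem mk_subsets_prod_le {α : Type u} {T : Set α} {μ : Cardinal.{u}} (hT : #T ≤ μ)
    (hμ : ℵ₀ ≤ μ) (c : Cardinal.{u}) :
    #{p : Set (α × α) | p ⊆ T ×ˢ T ∧ #p ≤ c} ≤ μ ^ c := by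
  refine (mk_bounded_subset_le (T ×ˢ T) c).trans (power_le_power_right (max_le ?_ hμ))
  calc #(T ×ˢ T) = #T * #T := by rw [mk_congr (Equiv.Set.prod T T), mk_prod, Cardinal.lift_id]
    _ ≤ μ * μ := mul_le_mul' hT hT
    _ = μ := mul_eq_self hμ

def IsUnboundedIn (b : Set Ordinal.{u}) (α : Ordinal.{u}) : Prop :=
  b ⊆ Iio α ∧ ∀ x < α, ∃ ξ ∈ b, x < ξ

theorem exists_isUnboundedIn_mk_le_cof {α : Ordinal.{u}} (hα : IsSuccLimit α) :
    ∃ U, IsUnboundedIn U α ∧ #U ≤ lift.{u + 1} α.cof := by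
  obtain ⟨s, hs, hcard⟩ := Order.exists_cof_eq (Iio α)
  refine ⟨Subtype.val '' s, ⟨?_, fun x hx => ?_⟩, ?_⟩
  · rintro _ ⟨ξ, -, rfl⟩
    exact ξ.2
  · obtain ⟨ξ, hξ, hle⟩ := hs ⟨succ x, hα.succ_lt hx⟩
    exact ⟨ξ, mem_image_of_mem _ hξ, succ_le_iff.1 hle⟩
  · calc #(Subtype.val '' s) ≤ #s := mk_image_le
      _ = lift.{u + 1} α.cof := by rw [hcard, cof_Iio, lift_cof]

theorem exists_isUnboundedIn_forall_lt_of_cof_ne {α γ : Ordinal.{u}} (hα : IsSuccLimit α)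
    (hγ : IsSuccLimit γ) (hne : α.cof ≠ γ.cof) {f : Ordinal.{u} → Ordinal.{u}}
    (hf : ∀ ξ < α, f ξ < γ) :
    ∃ w < γ, ∃ b, IsUnboundedIn b α ∧ #b ≤ lift.{u + 1} α.cof ∧ ∀ ξ ∈ b, f ξ < w := by
  obtain ⟨U, ⟨hUα, hU⟩, hUcard⟩ := exists_isUnboundedIn_mk_le_cof hα
  rcases hne.lt_or_gt with hlt | hgt
  · have hbdd : BddAbove (f '' U) := ⟨γ, by rintro _ ⟨ξ, hξ, rfl⟩; exact (hf ξ (hUα hξ)).le⟩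
    have hsup : sSup (f '' U) < γ := by
      refine sSup_lt_of_lt_cof ?_ (by rintro _ ⟨ξ, hξ, rfl⟩; exact hf ξ (hUα hξ))
      rw [← lift_cof]
      exact mk_image_le.trans_lt (hUcard.trans_lt (lift_lt.2 hlt))
    exact ⟨succ (sSup (f '' U)), hγ.succ_lt hsup, U, ⟨hUα, hU⟩, hUcard,
      fun ξ hξ => lt_succ_iff.2 (le_csSup hbdd (mem_image_of_mem f hξ))⟩
  obtain ⟨W, ⟨hWγ, hW⟩, hWcard⟩ := exists_isUnboundedIn_mk_le_cof hγ
  suffices ∃ w ∈ W, ∀ x < α, ∃ ξ ∈ U, f ξ < w ∧ x < ξ by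
    obtain ⟨w, hwW, hw⟩ := this
    refine ⟨w, hWγ hwW, {ξ ∈ U | f ξ < w}, ⟨fun ξ hξ => hUα hξ.1, fun x hx => ?_⟩,
      (mk_le_mk_of_subset fun ξ hξ => hξ.1).trans hUcard, fun ξ hξ => hξ.2⟩
    obtain ⟨ξ, hξU, hfξ, hxξ⟩ := hw x hx
    exact ⟨ξ, ⟨hξU, hfξ⟩, hxξ⟩
  -- otherwise the `cf γ < cf α` many bounds `t w` have a supremum below `α`
  by_contra! hbdd
  choose t ht hbound using hbdd
  have hsup : sSup (range fun w : W => t w w.2) < α := by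
    refine sSup_lt_of_lt_cof ?_ (by rintro _ ⟨w, rfl⟩; exact ht w w.2)
    rw [← lift_cof]
    exact mk_range_le.trans_lt (hWcard.trans_lt (lift_lt.2 hgt))
  obtain ⟨ξ, hξU, hξ⟩ := hU _ hsup
  obtain ⟨w, hwW, hfw⟩ := hW _ (hf ξ (hUα hξU))
  have hbddt : BddAbove (range fun w : W => t w w.2) :=
    ⟨α, by rintro _ ⟨w, rfl⟩; exact (ht w w.2).le⟩
  exact ((hbound w hwW ξ hξU hfw).trans (le_csSup hbddt ⟨⟨w, hwW⟩, rfl⟩)).not_gt hξ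

theorem isClubIn_setOf_forall_lt {c : Cardinal.{0}} (hc : c.IsRegular) (hc₀ : ℵ₀ < c)
    {h : Ordinal.{0} → Ordinal.{0}} (hh : ∀ β < c.ord, h β < c.ord) :
    IsClubIn {α | α < c.ord ∧ ∀ β < α, h β < α} c.ord := by
  refine ⟨fun α hα => hα.1, fun α hα => ?_, fun s hs hne hsup => ⟨hsup, fun β hβ => ?_⟩⟩
  · let g : Ordinal.{0} → Ordinal.{0} := fun δ => ⨆ β : Iio δ, h β + 1
    have hg : ∀ δ < c.ord, g δ < c.ord := fun δ hδ => by
      refine lift_iSup_add_one_lt_of_lt_cof ?_ fun β => hh β (β.2.trans hδ)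
      rw [Cardinal.mk_Iio_ordinal, ← Ordinal.lift_cof, hc.cof_ord]
      simpa only [Cardinal.lift_lift, Cardinal.lift_lt] using lt_ord.1 hδ
    refine ⟨nfp g α, ⟨nfp_lt_ord (by rwa [hc.cof_ord]) hg hα, fun β hβ => ?_⟩, le_nfp g α⟩
    obtain ⟨n, hn⟩ := lt_nfp_iff.1 hβ
    calc h β < h β + 1 := lt_add_one _
      _ ≤ g (g^[n] α) := le_ciSup (f := fun β : Iio (g^[n] α) => h β + 1)
          Ordinal.bddAbove_of_small ⟨β, hn⟩
      _ = g^[n + 1] α := (Function.iterate_succ_apply' g n α).symm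
      _ ≤ nfp g α := iterate_le_nfp g α (n + 1)
  · have hbdd : BddAbove s := ⟨c.ord, fun γ hγ => (hs hγ).1.le⟩
    obtain ⟨γ, hγs, hβγ⟩ := (lt_csSup_iff hbdd hne).1 hβ
    exact ((hs hγs).2 β hβγ).trans_le (le_csSup hbdd hγs)

theorem card_le_of_lt_succOrd {lam : Cardinal.{0}} {β : Ordinal.{0}} (hβ : β < succOrd lam) :
    β.card ≤ lam :=
  lt_succ_iff.1 (lt_ord.1 hβ)

theorem exists_surjOn_powerset_Iio {lam : Cardinal.{0}} (h2 : 2 ^ lam = succ lam) :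
    ∃ X : Ordinal.{0} → Ordinal.{0} → Set Ordinal.{0},
      ∀ β < succOrd lam, SurjOn (X β) (Iio (succOrd lam)) (𝒫 Iio β) := by
  have (β) (hβ : β < succOrd lam) :
      ∃ Xβ : Ordinal.{0} → Set Ordinal.{0}, SurjOn Xβ (Iio (succOrd lam)) (𝒫 Iio β) := by
    refine exists_surjOn_of_mk_le ⟨∅, empty_subset _⟩ ?_
    rw [mk_powerset, Cardinal.mk_Iio_ordinal, Cardinal.mk_Iio_ordinal, succOrd, card_ord, ← h2,
      Cardinal.lift_power, Cardinal.lift_two]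
    exact power_le_power_left two_ne_zero (Cardinal.lift_le.2 (card_le_of_lt_succOrd hβ))
  choose! X hX using this
  exact ⟨X, hX⟩

theorem exists_surjOn_Iio_ord (lam : Cardinal.{0}) :
    ∃ E : Ordinal.{0} → Ordinal.{0} → Ordinal.{0},
      ∀ α, 0 < α → α < succOrd lam → SurjOn (E α) (Iio lam.ord) (Iio α) := by
  have (α : Ordinal.{0}) (hα : 0 < α) (hακ : α < succOrd lam) :
      ∃ Eα : Ordinal.{0} → Ordinal.{0}, SurjOn Eα (Iio lam.ord) (Iio α) := by
    refine exists_surjOn_of_mk_le ⟨0, hα⟩ ?_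
    rw [Cardinal.mk_Iio_ordinal, Cardinal.mk_Iio_ordinal, card_ord, Cardinal.lift_le]
    exact card_le_of_lt_succOrd hακ
  choose! E hE using this
  exact ⟨E, hE⟩

/-- Candidates for the graph of a code function on an unbounded subset of `α`, when `E`
enumerates `α`. -/
def guessFamily (E : Ordinal.{0} → Ordinal.{0}) (lam σ : Cardinal.{0}) :
    Set (Set (Ordinal.{0} × Ordinal.{0})) :=
  {p | ∃ w < lam.ord, p ⊆ (E '' Iio w) ×ˢ (E '' Iio w) ∧ #p ≤ Cardinal.lift.{1} σ}

theorem mk_guessFamily_le {lam σ : Cardinal.{0}} (E : Ordinal.{0} → Ordinal.{0})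
    (hlam : ℵ₀ < lam) (hpow : ∀ μ < lam, μ ^ σ ≤ lam) :
    #(guessFamily E lam σ) ≤ Cardinal.lift.{1} lam := by
  let P : Iio lam.ord → Set (Set (Ordinal.{0} × Ordinal.{0})) := fun w =>
    {p | p ⊆ (E '' Iio w.1) ×ˢ (E '' Iio w.1) ∧ #p ≤ Cardinal.lift.{1} σ}
  have hsub : guessFamily E lam σ ⊆ ⋃ w, P w := fun p ⟨w, hw, hp⟩ =>
    mem_iUnion.2 ⟨⟨w, hw⟩, hp⟩
  have hP (w : Iio lam.ord) : #(P w) ≤ Cardinal.lift.{1} lam := by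
    have hT : #(E '' Iio w.1) ≤ Cardinal.lift.{1} (max w.1.card ℵ₀) := by
      refine mk_image_le.trans ?_
      rw [Cardinal.mk_Iio_ordinal, Cardinal.lift_le]
      exact le_max_left _ _
    calc #(P w) ≤ Cardinal.lift.{1} (max w.1.card ℵ₀) ^ Cardinal.lift.{1} σ :=
          mk_subsets_prod_le hT (by simp) _
      _ = Cardinal.lift.{1} (max w.1.card ℵ₀ ^ σ) := (Cardinal.lift_power _ _).symm
      _ ≤ Cardinal.lift.{1} lam := Cardinal.lift_le.2 (hpow _ (max_lt (lt_ord.1 w.2) hlam))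
  calc #(guessFamily E lam σ) ≤ #(⋃ w, P w) := mk_le_mk_of_subset hsub
    _ ≤ #(Iio lam.ord) * ⨆ w, #(P w) := mk_iUnion_le P
    _ ≤ Cardinal.lift.{1} lam * Cardinal.lift.{1} lam := by
      refine mul_le_mul' ?_ (ciSup_le' hP)
      rw [Cardinal.mk_Iio_ordinal, card_ord]
    _ = Cardinal.lift.{1} lam := by
      rw [← Cardinal.lift_mul, mul_eq_self hlam.le]

theorem exists_graph_mem_guessFamily {lam : Cardinal.{0}} {α : Ordinal.{0}}
    (hα : IsSuccLimit α) (hlam : ℵ₀ ≤ lam) (hne : α.cof ≠ cofC lam)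
    {E : Ordinal.{0} → Ordinal.{0}} (hE : SurjOn E (Iio lam.ord) (Iio α))
    {h : Ordinal.{0} → Ordinal.{0}} (hh : ∀ β < α, h β < α) :
    ∃ b, IsUnboundedIn b α ∧ (fun ξ => (ξ, h ξ)) '' b ∈ guessFamily E lam α.cof := by
  let pre := Function.invFunOn E (Iio lam.ord)
  have hpre (ξ) (hξ : ξ < α) : pre ξ < lam.ord ∧ E (pre ξ) = ξ :=
    Function.invFunOn_pos (hE hξ)
  obtain ⟨w, hw, b, hb, hbcard, hbw⟩ :=
    exists_isUnboundedIn_forall_lt_of_cof_ne hα (isSuccLimit_ord hlam) hne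
      (f := fun ξ => max (pre ξ) (pre (h ξ)))
      fun ξ hξ => max_lt (hpre ξ hξ).1 (hpre _ (hh ξ hξ)).1
  refine ⟨b, hb, w, hw, ?_, mk_image_le.trans hbcard⟩
  rintro _ ⟨ξ, hξ, rfl⟩
  have hξα := hb.1 hξ
  exact ⟨⟨pre ξ, (le_max_left _ _).trans_lt (hbw ξ hξ), (hpre ξ hξα).2⟩,
    ⟨pre (h ξ), (le_max_right _ _).trans_lt (hbw ξ hξ), (hpre _ (hh ξ hξα)).2⟩⟩

/-- The subset of `α` coded by a set `p` of pairs `(ξ, γ)`, where `γ` codes a subset of `ξ`. -/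
def decode (X : Ordinal.{0} → Ordinal.{0} → Set Ordinal.{0}) (α : Ordinal.{0})
    (p : Set (Ordinal.{0} × Ordinal.{0})) : Set Ordinal.{0} :=
  Iio α ∩ ⋃ q ∈ p, X q.1 q.2

theorem decode_graph {X : Ordinal.{0} → Ordinal.{0} → Set Ordinal.{0}} {α : Ordinal.{0}}
    {b : Set Ordinal.{0}} (hb : IsUnboundedIn b α) {h : Ordinal.{0} → Ordinal.{0}}
    {Z : Set Ordinal.{0}} (hcode : ∀ ξ ∈ b, X ξ (h ξ) = Z ∩ Iio ξ) :
    decode X α ((fun ξ => (ξ, h ξ)) '' b) = Z ∩ Iio α := by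
  ext x
  simp only [decode, mem_inter_iff, mem_iUnion₂, mem_image]
  constructor
  · rintro ⟨hxα, _, ⟨ξ, hξ, rfl⟩, hx⟩
    rw [hcode ξ hξ] at hx
    exact ⟨hx.1, hxα⟩
  · rintro ⟨hxZ, hxα⟩
    obtain ⟨ξ, hξ, hxξ⟩ := hb.2 x hxα
    exact ⟨hxα, _, ⟨ξ, hξ, rfl⟩, by rw [hcode ξ hξ]; exact ⟨hxZ, hxξ⟩⟩

theorem stmt2_general (lam σ : Cardinal.{0})
    (hinf : Cardinal.aleph0 ≤ lam)
    (h2 : 2 ^ lam = Order.succ lam)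
    (hσ : σ.IsRegular) (hsiglt : σ < lam) (hne : σ ≠ cofC lam)
    (hsup : (⨆ μ : Set.Iio lam, (μ : Cardinal.{0}) ^ σ) = lam) :
    DiamondStar lam (Eeq lam σ) := by
  have hpow : ∀ μ < lam, μ ^ σ ≤ lam := fun μ hμ =>
    hsup ▸ le_ciSup Cardinal.bddAbove_of_small (⟨μ, hμ⟩ : Iio lam)
  obtain ⟨X, hX⟩ := exists_surjOn_powerset_Iio h2
  obtain ⟨E, hE⟩ := exists_surjOn_Iio_ord lam
  refine ⟨fun α => decode X α '' guessFamily (E α) lam σ, fun α _ => ⟨?_, ?_⟩, fun Z _ => ?_⟩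
  · rintro _ ⟨p, -, rfl⟩
    exact inter_subset_left
  · exact mk_image_le.trans (mk_guessFamily_le _ (hσ.aleph0_le.trans_lt hsiglt) hpow)
  choose! code hcode using fun β (hβ : β < succOrd lam) => hX β hβ (inter_subset_right (s := Z))
  refine ⟨_, isClubIn_setOf_forall_lt (isRegular_succ hinf) (lt_succ_of_le hinf)
    fun β hβ => (hcode β hβ).1, ?_⟩
  rintro α ⟨⟨hακ, hαcl⟩, -, hαcof⟩
  have hα : IsSuccLimit α := one_lt_cof_iff.1 (hαcof ▸ one_lt_aleph0.trans_le hσ.aleph0_le)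
  obtain ⟨b, hb, hbQ⟩ :=
    exists_graph_mem_guessFamily hα hinf (hαcof ▸ hne) (hE α hα.pos hακ) hαcl
  exact ⟨_, hαcof ▸ hbQ, decode_graph hb fun ξ hξ => (hcode ξ ((hb.1 hξ).trans hακ)).2⟩

theorem stmt2 (lam σ : Cardinal.{0})
    (hinf : Cardinal.aleph0 ≤ lam) (hsing : cofC lam < lam)
    (h2 : 2 ^ lam = Order.succ lam)
    (hσ : σ.IsRegular) (hsiglt : σ < lam) (hne : σ ≠ cofC lam)
    (hsup : (⨆ μ : Set.Iio lam, (μ : Cardinal.{0}) ^ σ) = lam) :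
    DiamondStar lam (Eeq lam σ) :=
  stmt2_general lam σ hinf h2 hσ hsiglt hne hsup

end DiamondSurvey
end
end

section
/- Let λ be an infinite cardinal and let T ⊆ S ⊆ λ⁺ with both T and S stationary. If ◊*_S holds, then ◊_T holds. -/
noncomputable section

namespace DiamondSurvey

open Cardinal

/-!
Enumerate each `◊*`-family as `⟨g α η : η < λ⟩` and decode through the pairing
`(β, η) ↦ λ * β + η`: the candidates for `◊_T` are `A^η_α = {β < α : λ * β + η ∈ g α η}`.
If all `λ` of them fail, pick for each `η` a set `Z_η` and a club `C_η` on which `A^η` never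
guesses `Z_η` on `T`, and let `◊*` guess the single coded set `⋃_η {λ * β + η : β ∈ Z_η}` on a
club `D`. At `α ∈ T` lying in `D`, in every `C_η` and with `λ * α = α`, some `g α η`
is the code of the guessed set below `α`, and its `η`-th slice is `Z_η ∩ α`: a contradiction.
-/

universe u

open Set

section Clubs

variable {κ : Ordinal.{0}}

theorem not_isStationaryIn_iff {S : Set Ordinal.{0}} :
    ¬ IsStationaryIn S κ ↔ ∃ C, IsClubIn C κ ∧ ∀ α ∈ C, α ∉ S := by
  simp only [IsStationaryIn, not_forall, not_nonempty_iff_eq_empty, eq_empty_iff_forall_notMem,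
    mem_inter_iff, not_and', exists_prop]

theorem IsClubIn.iInter_of_mk_lt {ι : Type} [Nonempty ι] {C : ι → Set Ordinal.{0}}
    (hκ : ℵ₀ < κ.cof) (hι : #ι < κ.cof) (hC : ∀ i, IsClubIn (C i) κ) :
    IsClubIn (⋂ i, C i) κ := by
  refine ⟨(iInter_subset C (Classical.arbitrary ι)).trans (hC _).1, fun a ha => ?_,
    fun s hs hne hlt => mem_iInter.2 fun i => (hC i).2.2 s (hs.trans (iInter_subset C i)) hne hlt⟩
  -- A common closure point of the maps `x ↦ min (C i ∩ [x, κ))` is a limit of points of each `C i`.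
  set next : ι → Ordinal.{0} → Ordinal.{0} := fun i x => sInf (C i ∩ Ici x)
  have next_mem : ∀ i, ∀ x < κ, next i x ∈ C i ∩ Ici x := fun i x hx =>
    csInf_mem (let ⟨y, hy, hxy⟩ := (hC i).2.1 x hx; ⟨y, hy, hxy⟩)
  set β := Ordinal.nfpFamily next a
  have hβ : β < κ :=
    Ordinal.nfpFamily_lt_ord hκ hι (fun i x hx => (hC i).1 (next_mem i x hx).1) ha
  have hfold : ∀ l, List.foldr next a l < κ :=
    fun l => (Ordinal.foldr_le_nfpFamily next a l).trans_lt hβ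
  refine ⟨β, mem_iInter.2 fun i => ?_, Ordinal.le_nfpFamily next a⟩
  set s := range fun l => next i (List.foldr next a l)
  have hsup : sSup s = β := by
    refine le_antisymm (csSup_le (range_nonempty _) ?_) (Ordinal.nfpFamily_le fun l => ?_)
    · rintro _ ⟨l, rfl⟩
      exact Ordinal.foldr_le_nfpFamily next a (i :: l)
    · exact (next_mem i _ (hfold l)).2.trans (le_csSup Ordinal.bddAbove_of_small ⟨l, rfl⟩)
  rw [← hsup]
  refine (hC i).2.2 s ?_ (range_nonempty _) (hsup ▸ hβ)
  rintro _ ⟨l, rfl⟩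
  exact (next_mem i _ (hfold l)).1

theorem IsClubIn.iInter {ι : Type u} [Small.{0} ι] [Nonempty ι] {C : ι → Set Ordinal.{0}}
    (hκ : ℵ₀ < κ.cof) (hι : Cardinal.lift.{0} #ι < Cardinal.lift.{u} κ.cof)
    (hC : ∀ i, IsClubIn (C i) κ) : IsClubIn (⋂ i, C i) κ := by
  obtain ⟨ι', ⟨e⟩⟩ : ∃ ι' : Type, Nonempty (ι' ≃ ι) := ⟨Shrink ι, ⟨(equivShrink ι).symm⟩⟩
  have : Nonempty ι' := ⟨e.symm (Classical.arbitrary ι)⟩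
  rw [← e.surjective.iInter_comp]
  refine IsClubIn.iInter_of_mk_lt hκ ?_ fun i => hC (e i)
  rwa [← Cardinal.lift_mk_eq'.2 ⟨e⟩, Cardinal.lift_lt] at hι

theorem IsClubIn.inter {C D : Set Ordinal.{0}} (hκ : ℵ₀ < κ.cof) (hC : IsClubIn C κ)
    (hD : IsClubIn D κ) : IsClubIn (C ∩ D) κ := by
  rw [inter_eq_iInter]
  exact IsClubIn.iInter_of_mk_lt hκ (Cardinal.mk_lt_aleph0.trans hκ) (Bool.rec hD hC)

theorem isClubIn_setOf_fixed {f : Ordinal.{0} → Ordinal.{0}} (hf : Order.IsNormal f)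
    (hκ : ℵ₀ < κ.cof) (hfκ : ∀ x < κ, f x < κ) : IsClubIn {α | α < κ ∧ f α = α} κ := by
  refine ⟨fun _ h => h.1, fun a ha => ⟨Ordinal.nfp f a, ⟨Ordinal.nfp_lt_ord hκ hfκ ha,
    Ordinal.nfp_fp hf a⟩, Ordinal.le_nfp f a⟩, fun s hs hne hlt => ⟨hlt, ?_⟩⟩
  rw [hf.map_sSup hne ⟨κ, fun x hx => (hs hx).1.le⟩, image_congr fun x hx => (hs hx).2, image_id']

end Clubs

section SuccOrd

variable {lam : Cardinal.{0}}

theorem lt_cof_succOrd (hinf : ℵ₀ ≤ lam) {c : Cardinal.{0}} (hc : c ≤ lam) :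
    c < (succOrd lam).cof := by
  rw [succOrd, (Cardinal.isRegular_succ hinf).cof_ord]
  exact Order.lt_succ_of_le hc

theorem mul_add_lt_succOrd (hinf : ℵ₀ ≤ lam) {β η : Ordinal.{0}} (hβ : β < succOrd lam)
    (hη : η < lam.ord) : lam.ord * β + η < succOrd lam := by
  rw [succOrd, Cardinal.lt_ord, Order.lt_succ_iff] at hβ ⊢
  rw [Ordinal.card_add, Ordinal.card_mul, Cardinal.card_ord]
  calc lam * β.card + η.card ≤ lam * lam + lam :=
        add_le_add (mul_le_mul_right hβ _) (Cardinal.lt_ord.mp hη).le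
    _ = lam := by rw [Cardinal.mul_eq_self hinf, Cardinal.add_eq_self hinf]

theorem IsClubIn.iInter_Iio_ord (hinf : ℵ₀ ≤ lam) {C : Iio lam.ord → Set Ordinal.{0}}
    (hC : ∀ η, IsClubIn (C η) (succOrd lam)) : IsClubIn (⋂ η, C η) (succOrd lam) := by
  have : Nonempty (Iio lam.ord) :=
    ⟨⟨0, Cardinal.ord_pos.2 (Cardinal.aleph0_pos.trans_le hinf)⟩⟩
  refine IsClubIn.iInter (lt_cof_succOrd hinf hinf) ?_ hC
  rw [Cardinal.lift_uzero, Cardinal.mk_Iio_ordinal, Cardinal.card_ord, Cardinal.lift_lt]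
  exact lt_cof_succOrd hinf le_rfl

theorem isClubIn_setOf_ord_mul_eq (hinf : ℵ₀ ≤ lam) :
    IsClubIn {α | α < succOrd lam ∧ lam.ord * α = α} (succOrd lam) := by
  have hpos : 0 < lam.ord := Cardinal.ord_pos.2 (Cardinal.aleph0_pos.trans_le hinf)
  exact isClubIn_setOf_fixed (Ordinal.isNormal_mul_right hpos) (lt_cof_succOrd hinf hinf)
    fun x hx => add_zero (lam.ord * x) ▸ mul_add_lt_succOrd hinf hx hpos

end SuccOrd

section Pairing

variable {a : Ordinal.{0}}

theorem mul_add_inj_of_lt {β β' η η' : Ordinal.{0}} (hη : η < a) (hη' : η' < a)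
    (h : a * β + η = a * β' + η') : β = β' ∧ η = η' := by
  have ha : a ≠ 0 := hη.ne_bot
  have hdiv : ∀ b, ∀ e < a, (a * b + e) / a = b := fun b e he => by
    rw [Ordinal.mul_add_div _ ha, Ordinal.div_eq_zero_of_lt he, add_zero]
  refine ⟨by rw [← hdiv β η hη, h, hdiv β' η' hη'], ?_⟩
  simpa only [Ordinal.mul_add_mod_self, Ordinal.mod_eq_of_lt hη, Ordinal.mod_eq_of_lt hη']
    using congrArg (· % a) h

theorem preimage_mul_add_iUnion_image (Z : Iio a → Set Ordinal.{0}) {η : Ordinal.{0}}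
    (hη : η < a) : (a * · + η) ⁻¹' (⋃ ξ : Iio a, (a * · + ξ) '' Z ξ) = Z ⟨η, hη⟩ := by
  ext β
  simp only [mem_preimage, mem_iUnion, mem_image]
  constructor
  · rintro ⟨⟨ξ, hξ⟩, β', hβ', hcode⟩
    obtain ⟨rfl, rfl⟩ := mul_add_inj_of_lt hξ hη hcode
    exact hβ'
  · exact fun hβ => ⟨⟨η, hη⟩, β, hβ, rfl⟩

theorem preimage_mul_add_inter_Iio {α η : Ordinal.{0}} (hα : a * α = α) (hη : η < a)
    (X : Set Ordinal.{0}) : (a * · + η) ⁻¹' (X ∩ Iio α) = (a * · + η) ⁻¹' X ∩ Iio α := by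
  ext β
  simp only [mem_preimage, mem_inter_iff, mem_Iio, and_congr_right_iff]
  refine fun _ => ⟨fun h => ?_, fun h => ?_⟩
  · exact ((Ordinal.le_mul_right β hη.bot_lt).trans le_self_add).trans_lt h
  · calc a * β + η < a * β + a := (add_lt_add_iff_left _).2 hη
      _ = a * Order.succ β := by rw [Ordinal.mul_succ]
      _ ≤ a * α := mul_le_mul_right (Order.succ_le_of_lt h) a
      _ = α := hα

end Pairing

theorem exists_subset_image_Iio_ord {γ : Type (u + 1)} [Inhabited γ] {s : Set γ}
    {lam : Cardinal.{u}} (h : #s ≤ Cardinal.lift.{u + 1} lam) :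
    ∃ g : Ordinal.{u} → γ, s ⊆ g '' Iio lam.ord := by
  rw [← Cardinal.card_ord lam, ← Cardinal.mk_Iio_ordinal] at h
  obtain ⟨e⟩ := h
  have he : Function.Injective fun X : s => (e X : Ordinal.{u}) :=
    Subtype.val_injective.comp e.injective
  exact ⟨Function.extend _ Subtype.val default, fun X hX =>
    ⟨e ⟨X, hX⟩, (e ⟨X, hX⟩).2, he.extend_apply _ _ ⟨X, hX⟩⟩⟩

theorem diamond_of_enumerated_guesses {lam : Cardinal.{0}} (hinf : ℵ₀ ≤ lam)
    {T : Set Ordinal.{0}} (hT : IsStationaryIn T (succOrd lam))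
    {g : Ordinal.{0} → Ordinal.{0} → Set Ordinal.{0}}
    (hg : ∀ Z ⊆ Iio (succOrd lam), ∃ C, IsClubIn C (succOrd lam) ∧
      ∀ α ∈ C ∩ T, Z ∩ Iio α ∈ g α '' Iio lam.ord) :
    Diamond lam T := by
  set κ := succOrd lam
  have hκ : ℵ₀ < κ.cof := lt_cof_succOrd hinf hinf
  suffices ∃ η < lam.ord, ∀ Z ⊆ Iio κ, IsStationaryIn
      {α | α ∈ T ∧ Z ∩ Iio α = (lam.ord * · + η) ⁻¹' g α η ∩ Iio α} κ by
    obtain ⟨η, -, hη⟩ := this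
    exact ⟨fun α => (lam.ord * · + η) ⁻¹' g α η ∩ Iio α, fun _ _ => inter_subset_right, hη⟩
  by_contra! hfail
  have hcounter : ∀ η : Iio lam.ord, ∃ Z ⊆ Iio κ, ∃ C, IsClubIn C κ ∧
      ∀ α ∈ C ∩ T, Z ∩ Iio α ≠ (lam.ord * · + η) ⁻¹' g α η ∩ Iio α := by
    rintro ⟨η, hη⟩
    obtain ⟨Z, hZ, hns⟩ := hfail η hη
    obtain ⟨C, hC, hCZ⟩ := not_isStationaryIn_iff.1 hns
    exact ⟨Z, hZ, C, hC, fun α hα heq => hCZ α hα.1 ⟨hα.2, heq⟩⟩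
  choose Z hZ C hC hCZ using hcounter
  set Zall := ⋃ η : Iio lam.ord, (lam.ord * · + η) '' Z η
  have hZall : Zall ⊆ Iio κ := by
    simp only [Zall, iUnion_subset_iff, image_subset_iff]
    exact fun η β hβ => mul_add_lt_succOrd hinf (hZ η hβ) η.2
  obtain ⟨D, hD, hDg⟩ := hg Zall hZall
  have hclub : IsClubIn ((⋂ η, C η) ∩ D ∩ {α | α < κ ∧ lam.ord * α = α}) κ :=
    ((IsClubIn.iInter_Iio_ord hinf hC).inter hκ hD).inter hκ (isClubIn_setOf_ord_mul_eq hinf)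
  obtain ⟨α, hαT, ⟨hαC, hαD⟩, -, hαfix⟩ := hT _ hclub
  obtain ⟨η, hη, hguess⟩ := hDg α ⟨hαD, hαT⟩
  refine hCZ ⟨η, hη⟩ α ⟨mem_iInter.1 hαC _, hαT⟩ ?_
  rw [hguess, preimage_mul_add_inter_Iio hαfix hη, inter_assoc, inter_self,
    preimage_mul_add_iUnion_image Z hη]

theorem stmt5_general (lam : Cardinal.{0}) (hinf : Cardinal.aleph0 ≤ lam)
    (T S : Set Ordinal.{0}) (hTS : T ⊆ S)
    (hT : IsStationaryIn T (succOrd lam))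
    (h : DiamondStar lam S) : Diamond lam T := by
  obtain ⟨𝒜, h𝒜, hguess⟩ := h
  choose! g hg using fun α hα => exists_subset_image_Iio_ord (h𝒜 α hα).2
  refine diamond_of_enumerated_guesses hinf hT (g := g) fun Z hZ => ?_
  obtain ⟨C, hC, hCZ⟩ := hguess Z hZ
  exact ⟨C, hC, fun α hα => hg α (hTS hα.2) (hCZ α ⟨hα.1, hTS hα.2⟩)⟩

theorem stmt5 (lam : Cardinal.{0}) (hinf : Cardinal.aleph0 ≤ lam)
    (T S : Set Ordinal.{0}) (hTS : T ⊆ S) (hSsub : S ⊆ Set.Iio (succOrd lam))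
    (hT : IsStationaryIn T (succOrd lam)) (hS : IsStationaryIn S (succOrd lam))
    (h : DiamondStar lam S) : Diamond lam T :=
  stmt5_general lam hinf T S hTS hT h

end DiamondSurvey
end
end

section
/- Let λ be an infinite cardinal and let S ⊆ λ⁺ be stationary. If Φ_S holds, then no ladder system on S has the uniformization property. -/
/-! Apply `Φ_S` to the colouring that reads off the eventual value of `f ↾ α` along the ladder
`L α`, obtaining a guess `g`. Uniformizing the colouring `α ↦ ¬ g α` yields an `f` whose eventual
value along `L α` is `¬ g α` at every limit `α ∈ S`, so the guess fails on the whole club of limit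
ordinals below `λ⁺`. -/

noncomputable section

namespace DiamondSurvey

open Cardinal

open Order Ordinal

theorem isClubIn_setOf_isSuccLimit {c : Cardinal.{0}} (hc : ℵ₀ < c) :
    IsClubIn {α | α < c.ord ∧ IsSuccLimit α} c.ord := by
  refine ⟨fun α hα => hα.1, fun α hα => ?_, fun s hs hne hlt => ⟨hlt, ?_⟩⟩
  · exact ⟨α + ω, ⟨isPrincipal_add_ord hc.le hα (omega0_lt_ord.2 hc),
      Ordinal.isSuccLimit_add α Ordinal.isSuccLimit_omega0⟩, le_self_add⟩
  · by_contra hlim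
    have hbdd : BddAbove s := ⟨c.ord, fun x hx => (hs hx).1.le⟩
    exact hlim (hs (csSup_mem_of_not_isSuccLimit hne hbdd hlim)).2

theorem exists_tail_eq_of_sSup_lt {L : Set Ordinal.{0}} {α : Ordinal.{0}} (hLsub : L ⊆ Set.Iio α)
    {c f : Ordinal.{0} → Bool} (h : sSup {β | β ∈ L ∧ c β ≠ f β} < α) :
    ∃ δ < α, ∀ β ∈ L, δ < β → f β = c β := by
  refine ⟨_, h, fun β hβ hδβ => ?_⟩
  by_contra hne
  have hbdd : BddAbove {β | β ∈ L ∧ c β ≠ f β} := ⟨α, fun x hx => (hLsub hx.1).le⟩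
  exact hδβ.not_ge (le_csSup hbdd ⟨hβ, Ne.symm hne⟩)

def tailValue (L : Set Ordinal.{0}) (α : Ordinal.{0}) (h : Set.Iio α → Bool) : Bool :=
  open scoped Classical in
  decide (∃ γ < α, ∀ β (hβ : β < α), β ∈ L → γ < β → h ⟨β, hβ⟩ = true)

theorem tailValue_eq_of_exists_tail_eq {L : Set Ordinal.{0}} {α : Ordinal.{0}}
    (hLsub : L ⊆ Set.Iio α) (hLsup : sSup L = α) {f : Ordinal.{0} → Bool} {b : Bool}
    (hf : ∃ δ < α, ∀ β ∈ L, δ < β → f β = b) :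
    tailValue L α (fun β => f β.1) = b := by
  classical
  obtain ⟨δ, hδα, hδ⟩ := hf
  unfold tailValue
  cases b with
  | true => exact decide_eq_true ⟨δ, hδα, fun β _ hβL hδβ => hδ β hβL hδβ⟩
  | false =>
    refine decide_eq_false fun ⟨γ, hγα, hγ⟩ => ?_
    -- `L` is cofinal in `α`, so the two tails meet
    obtain ⟨β, hβL, hβ⟩ := exists_lt_of_lt_csSup' (hLsup ▸ max_lt hγα hδα : max γ δ < sSup L)
    have htrue := hγ β (hLsub hβL) hβL (le_max_left γ δ |>.trans_lt hβ)
    have hfalse := hδ β hβL (le_max_right γ δ |>.trans_lt hβ)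
    simp [htrue] at hfalse

theorem stmt15_general (lam : Cardinal.{0}) (hinf : Cardinal.aleph0 ≤ lam)
    (S : Set Ordinal.{0})
    (hwd : WeakDiamond lam S) :
    ∀ L : Ordinal.{0} → Set Ordinal.{0}, IsLadderSystem S L →
      ¬ HasUniformization S L := by
  intro L hL hU
  obtain ⟨g, hg⟩ := hwd fun α h => tailValue (L α) α h
  obtain ⟨f, hf⟩ := hU fun α _ => !g α
  obtain ⟨α, ⟨hαS, hguess⟩, -, hαlim⟩ :=
    hg f _ (isClubIn_setOf_isSuccLimit (hinf.trans_lt (lt_succ lam)))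
  obtain ⟨hLsub, hLsup, -⟩ := hL α hαS
  have hmiss : tailValue (L α) α (fun β => f β.1) = !g α :=
    tailValue_eq_of_exists_tail_eq hLsub hLsup (exists_tail_eq_of_sSup_lt hLsub (hf α hαS hαlim))
  rw [hguess] at hmiss
  cases h : g α <;> simp [h] at hmiss

theorem stmt15 (lam : Cardinal.{0}) (hinf : Cardinal.aleph0 ≤ lam)
    (S : Set Ordinal.{0}) (hSsub : S ⊆ Set.Iio (succOrd lam))
    (hstat : IsStationaryIn S (succOrd lam))
    (hwd : WeakDiamond lam S) :
    ∀ L : Ordinal.{0} → Set Ordinal.{0}, IsLadderSystem S L →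
      ¬ HasUniformization S L :=
  stmt15_general lam hinf S hwd

end DiamondSurvey
end
end
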